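/- Let 1 < p < p′ < ∞ and set Y = {f ∈ L^{p,∞}(ℝⁿ) : f ∈ L^{p′}(ℝⁿ)}. Then for every ε > 0 and every f ∈ BC([0,∞); L̃^{p,∞}(ℝⁿ)) there exists f_ε ∈ BC([0,∞); Y) with sup_{s ≥ 0} ‖f(s) - f_ε(s)‖_{p,∞} < ε; that is, BC([0,∞); Y) is dense in BC([0,∞); L̃^{p,∞}(ℝⁿ)). -/

import Mathlib

open MeasureTheory Real Filter Topology ENNReal

noncomputable section

abbrev Rn (n : ℕ) := EuclideanSpace ℝ (Fin n)

/-- The weak `L^p` quasi-norm `sup_{λ>0} λ · |{|f| > λ}|^{1/p}`. -/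
def wk {n : ℕ} {α : Type*} [NormedAddCommGroup α] (p : ℝ) (f : Rn n → α) : ℝ≥0∞ :=
  ⨆ l : NNReal, (l : ℝ≥0∞) * (volume {x : Rn n | (l : ℝ) < ‖f x‖}) ^ (1 / p)

/-- The Gaussian heat kernel on `ℝⁿ`. -/
def heatKernel (n : ℕ) (t : ℝ) (x : Rn n) : ℝ :=
  (4 * π * t) ^ (-(n : ℝ) / 2) * Real.exp (-‖x‖ ^ 2 / (4 * t))

/-- The heat semigroup `e^{tΔ}` acting by convolution with the Gaussian kernel. -/
def heat {n : ℕ} {α : Type*} [NormedAddCommGroup α] [NormedSpace ℝ α] (t : ℝ)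
    (f : Rn n → α) : Rn n → α :=
  fun x => ∫ y, heatKernel n t (x - y) • f y

/-- Fourier multiplier with real symbol `m`, acting on real valued functions. -/
def fourierMul {n : ℕ} (m : Rn n → ℝ) (f : Rn n → ℝ) : Rn n → ℝ :=
  fun x => (FourierTransformInv.fourierInv
    (fun ξ => (m ξ : ℂ) * FourierTransform.fourier (fun y => (f y : ℂ)) ξ) x).re

/-- The Leray–Helmholtz projection `ℙ = (δ_{jk} + R_j R_k)_{j,k}` via Fourier multipliers. -/
def leray {n : ℕ} (f : Rn n → Fin n → ℝ) : Rn n → Fin n → ℝ :=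
  fun x j => ∑ k, fourierMul
    (fun ξ => (if j = k then (1 : ℝ) else 0) - ξ j * ξ k / ‖ξ‖ ^ 2) (fun y => f y k) x

/-- The `j`-th standard basis vector. -/
def eV (n : ℕ) (j : Fin n) : Rn n := EuclideanSpace.single j 1

/-- A vector field is solenoidal (divergence free). -/
def Solenoidal {n : ℕ} (f : Rn n → Fin n → ℝ) : Prop :=
  ∀ x, ∑ j, fderiv ℝ (fun y => f y j) x (eV n j) = 0

/-- The componentwise Laplacian. -/
def lap {n : ℕ} (f : Rn n → Fin n → ℝ) : Rn n → Fin n → ℝ :=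
  fun x k => ∑ j, fderiv ℝ (fun y => fderiv ℝ (fun z => f z k) y (eV n j)) x (eV n j)

/-- Membership in `X_σ^{n,∞}`, the closure of `D(-Δ) = {u ∈ L_σ^{n,∞} : Δu ∈ L^{n,∞}}`
in the weak-`L^n` norm. -/
def MemX {n : ℕ} (u : Rn n → Fin n → ℝ) : Prop :=
  ∀ ε : ℝ, 0 < ε → ∃ v : Rn n → Fin n → ℝ, Solenoidal v ∧ wk (n : ℝ) v < ⊤ ∧
    wk (n : ℝ) (lap v) < ⊤ ∧ wk (n : ℝ) (u - v) < ENNReal.ofReal ε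

/-- Membership in `L̃^{p,∞}`, the closure of `L^{p,∞} ∩ L^∞` in the weak-`L^p` norm. -/
def MemTilde {n : ℕ} {α : Type*} [NormedAddCommGroup α] (p : ℝ) (u : Rn n → α) : Prop :=
  ∀ ε : ℝ, 0 < ε → ∃ v : Rn n → α, wk p v < ⊤ ∧ eLpNorm v ⊤ volume < ⊤ ∧
    wk p (u - v) < ENNReal.ofReal ε

/-- Membership in `L̃_σ^{n,∞}`, the closure of `L_σ^{n,∞} ∩ L^∞` in the weak-`L^n` norm. -/
def MemTildeSigma {n : ℕ} (u : Rn n → Fin n → ℝ) : Prop :=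
  ∀ ε : ℝ, 0 < ε → ∃ v : Rn n → Fin n → ℝ, Solenoidal v ∧ wk (n : ℝ) v < ⊤ ∧
    eLpNorm v ⊤ volume < ⊤ ∧ wk (n : ℝ) (u - v) < ENNReal.ofReal ε

/-- `BCOn N I u` : the `X`-valued curve `u` is bounded on `I` and continuous on `I`
with respect to the (quasi-)norm functional `N`. -/
def BCOn {n : ℕ} {α : Type*} [NormedAddCommGroup α] (N : (Rn n → α) → ℝ≥0∞)
    (I : Set ℝ) (u : ℝ → Rn n → α) : Prop :=
  (∃ C : ℝ≥0∞, C < ⊤ ∧ ∀ t ∈ I, N (u t) ≤ C) ∧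
  ∀ t ∈ I, Tendsto (fun s => N (u s - u t)) (nhdsWithin t I) (nhds 0)

/-- Duhamel term `∫₀ᵗ e^{(t-s)Δ} ℙ f(s) ds`. -/
def duhamelPF {n : ℕ} (f : ℝ → Rn n → Fin n → ℝ) (t : ℝ) : Rn n → Fin n → ℝ :=
  fun x k => ∫ s in Set.Ioc (0 : ℝ) t, heat (t - s) (leray (f s)) x k

/-- Duhamel term `∫₀ᵗ ℙ e^{(t-s)Δ} f(s) ds`. -/
def duhamelFP {n : ℕ} (f : ℝ → Rn n → Fin n → ℝ) (t : ℝ) : Rn n → Fin n → ℝ :=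
  fun x k => ∫ s in Set.Ioc (0 : ℝ) t, leray (heat (t - s) (f s)) x k

/-- The tensor product `u ⊗ v`. -/
def tens {n : ℕ} (u v : Rn n → Fin n → ℝ) : Rn n → Fin n → Fin n → ℝ :=
  fun x j k => u x j * v x k

/-- The Leray projection applied to the rows of a matrix-valued function. -/
def lerayM {n : ℕ} (F : Rn n → Fin n → Fin n → ℝ) : Rn n → Fin n → Fin n → ℝ :=
  fun x j k => leray (fun y => F y j) x k

/-- Nonlinear Duhamel term `∫₀ᵗ ∇·e^{(t-s)Δ} ℙ (u⊗u)(s) ds` (weak mild form). -/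
def nonlinWeak {n : ℕ} (u : ℝ → Rn n → Fin n → ℝ) (t : ℝ) : Rn n → Fin n → ℝ :=
  fun x k => ∫ s in Set.Ioc (0 : ℝ) t,
    ∑ j, fderiv ℝ (fun y => heat (t - s) (lerayM (tens (u s) (u s))) y j k) x (eV n j)

/-- The convection term `u · ∇v`. -/
def convTerm {n : ℕ} (u v : Rn n → Fin n → ℝ) : Rn n → Fin n → ℝ :=
  fun x k => ∑ j, u x j * fderiv ℝ (fun y => v y k) x (eV n j)

/-- Nonlinear Duhamel term `∫₀ᵗ e^{(t-s)Δ} ℙ [u·∇u](s) ds` (mild form). -/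
def nonlinMild {n : ℕ} (u : ℝ → Rn n → Fin n → ℝ) (t : ℝ) : Rn n → Fin n → ℝ :=
  fun x k => ∫ s in Set.Ioc (0 : ℝ) t, heat (t - s) (leray (convTerm (u s) (u s))) x k

/-- Weak mild solution (integral equation IE*, with `e^{(t-s)Δ}ℙf`). -/
def IsWeakMildPF {n : ℕ} (a : Rn n → Fin n → ℝ) (f u : ℝ → Rn n → Fin n → ℝ)
    (I : Set ℝ) : Prop :=
  ∀ t ∈ I, ∀ x, u t x = heat t a x + duhamelPF f t x - nonlinWeak u t x

/-- Weak mild solution (integral equation IE**, with `ℙe^{(t-s)Δ}f`, used when `n = 3`). -/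
def IsWeakMildFP {n : ℕ} (a : Rn n → Fin n → ℝ) (f u : ℝ → Rn n → Fin n → ℝ)
    (I : Set ℝ) : Prop :=
  ∀ t ∈ I, ∀ x, u t x = heat t a x + duhamelFP f t x - nonlinWeak u t x

/-- Mild solution (integral equation IE, with convection form nonlinearity). -/
def IsMild {n : ℕ} (a : Rn n → Fin n → ℝ) (f u : ℝ → Rn n → Fin n → ℝ)
    (I : Set ℝ) : Prop :=
  ∀ t ∈ I, ∀ x, u t x = heat t a x + duhamelPF f t x - nonlinMild u t x

end

/-!
Truncating `f s` at a level `M` gives a function bounded by `M` whose weak-`L^p` quasi-norm is at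
most that of `f s`; a dyadic layer-cake estimate then puts it in `L^{p'}` for every `p' > p`.
Since `f s` is a weak-`L^p` limit of bounded functions, the truncation error is small for all
large `M`, and by continuity of `f` one level works on a whole neighbourhood of `s`. A partition
of unity glues these local levels into a continuous level `L ≥ 1`. The curve
`s ↦ truncAt (L s) ∘ f s` is continuous because truncation is `1`-Lipschitz and moving the level
from `M` to `M'` changes the truncation by at most `|M - M'|`, and only where `|f s| > 1`.
-/

open scoped NNReal

def truncAt (M y : ℝ) : ℝ := max (min y M) (-M)

lemma truncAt_of_abs_le {M y : ℝ} (h : |y| ≤ M) : truncAt M y = y := by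
  rw [abs_le] at h
  simp [truncAt, min_eq_left h.2, max_eq_left h.1]

lemma abs_truncAt_le {M : ℝ} (hM : 0 ≤ M) (y : ℝ) : |truncAt M y| ≤ M :=
  abs_le.mpr ⟨le_max_right _ _, max_le (min_le_right _ _) (by linarith)⟩

lemma abs_truncAt_le_abs {M : ℝ} (hM : 0 ≤ M) (y : ℝ) : |truncAt M y| ≤ |y| := by
  rcases le_or_gt |y| M with h | h
  · rw [truncAt_of_abs_le h]
  · exact (abs_truncAt_le hM y).trans h.le

lemma abs_sub_truncAt_le_abs {M : ℝ} (hM : 0 ≤ M) (y : ℝ) : |y - truncAt M y| ≤ |y| := by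
  unfold truncAt
  rcases le_total 0 y with hy | hy
  · rw [max_eq_left (le_min (by linarith) (by linarith) : -M ≤ min y M), abs_of_nonneg hy,
      abs_of_nonneg (sub_nonneg.mpr (min_le_left _ _))]
    linarith [le_min hy hM]
  · rw [min_eq_left (by linarith : y ≤ M), abs_of_nonpos hy,
      abs_of_nonpos (sub_nonpos.mpr (le_max_left _ _))]
    linarith [max_le hy (by linarith : -M ≤ 0)]

lemma abs_truncAt_sub_truncAt_le (M y z : ℝ) : |truncAt M y - truncAt M z| ≤ |y - z| :=
  (abs_max_sub_max_le_abs _ _ _).trans <| (abs_min_sub_min_le_max ..).trans (by simp)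

lemma abs_truncAt_sub_truncAt_level_le (M M' y : ℝ) :
    |truncAt M y - truncAt M' y| ≤ |M - M'| :=
  (abs_max_sub_max_le_max ..).trans <| max_le
    ((abs_min_sub_min_le_max ..).trans (by simp)) (by rw [neg_sub_neg, abs_sub_comm])

lemma abs_sub_truncAt_sub_le (M y z : ℝ) :
    |(y - truncAt M y) - (z - truncAt M z)| ≤ 2 * |y - z| := by
  calc |(y - truncAt M y) - (z - truncAt M z)|
      = |(y - z) - (truncAt M y - truncAt M z)| := by ring_nf
    _ ≤ |y - z| + |truncAt M y - truncAt M z| := abs_sub _ _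
    _ ≤ 2 * |y - z| := by linarith [abs_truncAt_sub_truncAt_le M y z]

lemma abs_sub_truncAt_le_two_mul {K M v : ℝ} (hv : |v| ≤ K) (hM : 2 * K ≤ M) (y : ℝ) :
    |y - truncAt M y| ≤ 2 * |y - v| := by
  rcases le_or_gt |y| M with h | h
  · rw [truncAt_of_abs_le h, sub_self, abs_zero]
    positivity
  · have h1 := abs_sub_abs_le_abs_sub y v
    have h2 := abs_sub_truncAt_le_abs (M := M) (by linarith [abs_nonneg v]) y
    linarith

lemma coe_two_mul_rpow_mul_div_rpow {p q : ℝ} (hp : 0 < p) (hq : 0 < q) {s : ℝ≥0}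
    (hs : s ≠ 0) (C : ℝ≥0∞) :
    ((2 * s : ℝ≥0) : ℝ≥0∞) ^ q * (C / s) ^ p = 2 ^ q * C ^ p * (s : ℝ≥0∞) ^ (q - p) := by
  rw [ENNReal.coe_mul, ENNReal.coe_ofNat, ENNReal.mul_rpow_of_nonneg _ _ hq.le,
    ENNReal.div_rpow_of_nonneg _ _ hp.le, sub_eq_add_neg,
    ENNReal.rpow_add _ _ (ENNReal.coe_ne_zero.mpr hs) ENNReal.coe_ne_top, ENNReal.rpow_neg,
    div_eq_mul_inv]
  ring

-- No measurability of `g` is assumed: the dyadic level sets enter through measurable hulls.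
lemma lintegral_rpow_le_tsum_dyadic {X E : Type*} [MeasurableSpace X] [NormedAddCommGroup E]
    (μ : Measure X) {q : ℝ} (hq : 0 < q) {g : X → E} {M : ℝ≥0} (hg : ∀ x, ‖g x‖ ≤ M) :
    ∫⁻ x, ‖g x‖ₑ ^ q ∂μ ≤ ∑' k : ℕ, ((2 * (M * 2⁻¹ ^ (k + 1)) : ℝ≥0) : ℝ≥0∞) ^ q *
      μ {x | ((M * 2⁻¹ ^ (k + 1) : ℝ≥0) : ℝ) < ‖g x‖} := by
  set A : ℕ → Set X := fun k => {x | ((M * 2⁻¹ ^ (k + 1) : ℝ≥0) : ℝ) < ‖g x‖}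
  set c : ℕ → ℝ≥0∞ := fun k => ((2 * (M * 2⁻¹ ^ (k + 1)) : ℝ≥0) : ℝ≥0∞) ^ q
  have hpt : ∀ x, ‖g x‖ₑ ^ q ≤ ∑' k, (toMeasurable μ (A k)).indicator (fun _ => c k) x := by
    intro x
    rcases eq_or_ne (g x) 0 with h0 | h0
    · simp [h0, ENNReal.zero_rpow_of_pos hq]
    have hg0 : 0 < ‖g x‖₊ := nnnorm_pos.mpr h0
    have hM : 0 < M := hg0.trans_le (hg x)
    obtain ⟨k, hlt, hle⟩ := exists_nat_pow_near_of_lt_one (div_pos hg0 hM)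
      ((div_le_one hM).mpr (hg x)) (inv_pos.mpr two_pos) (inv_lt_one_of_one_lt₀ one_lt_two)
    rw [lt_div_iff₀ hM, mul_comm] at hlt
    rw [div_le_iff₀ hM, mul_comm] at hle
    have hmem : x ∈ toMeasurable μ (A k) := subset_toMeasurable _ _ (by exact_mod_cast hlt)
    calc ‖g x‖ₑ ^ q ≤ c k := by
          refine ENNReal.rpow_le_rpow ?_ hq.le
          rw [enorm_eq_nnnorm, ENNReal.coe_le_coe]
          convert hle using 1
          rw [pow_succ]
          field_simp
      _ = (toMeasurable μ (A k)).indicator (fun _ => c k) x :=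
          (Set.indicator_of_mem hmem (fun _ => c k)).symm
      _ ≤ _ := ENNReal.le_tsum k
  calc ∫⁻ x, ‖g x‖ₑ ^ q ∂μ
      ≤ ∫⁻ x, ∑' k, (toMeasurable μ (A k)).indicator (fun _ => c k) x ∂μ := lintegral_mono hpt
    _ = ∑' k, c k * μ (A k) := by
        rw [lintegral_tsum fun k =>
          (measurable_const.indicator (measurableSet_toMeasurable _ _)).aemeasurable]
        simp_rw [lintegral_indicator_const (measurableSet_toMeasurable _ _), measure_toMeasurable]

-- The admissible levels at each point form an upper set, so a partition of unity can glue them.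
lemma exists_continuous_forall_of_eventually_forall_ge {X : Type*} [TopologicalSpace X]
    [NormalSpace X] [ParacompactSpace X] {P : X → ℝ → Prop}
    (h : ∀ x, ∃ K, ∀ᶠ y in 𝓝 x, ∀ M ≥ K, P y M) : ∃ L : C(X, ℝ), ∀ x, P x (L x) := by
  obtain ⟨L, hL⟩ := exists_continuous_forall_mem_convex_of_local_const
    (t := fun x => {K | ∀ M ≥ K, P x M})
    (fun x => Set.OrdConnected.convex ⟨fun _ ha _ _ _ hc M hM => ha M (hc.1.trans hM)⟩) h
  exact ⟨L, fun x => hL x _ le_rfl⟩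

section WeakLp

variable {n : ℕ} {α : Type*} [NormedAddCommGroup α] {p : ℝ}

lemma le_wk (p : ℝ) (f : Rn n → α) (l : ℝ≥0) :
    (l : ℝ≥0∞) * volume {x : Rn n | (l : ℝ) < ‖f x‖} ^ (1 / p) ≤ wk p f :=
  le_iSup (fun l : ℝ≥0 => (l : ℝ≥0∞) * volume {x : Rn n | (l : ℝ) < ‖f x‖} ^ (1 / p)) l

lemma wk_le_mul_of_ae_norm_le (hp : 0 ≤ p) {a b : Rn n → α} {c : ℝ≥0} (hc : c ≠ 0)
    (h : ∀ᵐ x, ‖a x‖ ≤ c * ‖b x‖) : wk p a ≤ c * wk p b := by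
  refine iSup_le fun l => ?_
  have hsub : volume {x : Rn n | (l : ℝ) < ‖a x‖} ≤
      volume {x : Rn n | ((l / c : ℝ≥0) : ℝ) < ‖b x‖} := by
    refine measure_mono_ae ?_
    filter_upwards [h] with x hx hlx
    change (l : ℝ) < ‖a x‖ at hlx
    change ((l / c : ℝ≥0) : ℝ) < ‖b x‖
    rw [NNReal.coe_div, div_lt_iff₀ (by positivity)]
    linarith
  calc (l : ℝ≥0∞) * volume {x : Rn n | (l : ℝ) < ‖a x‖} ^ (1 / p)
      ≤ c * ((l / c : ℝ≥0) * volume {x : Rn n | ((l / c : ℝ≥0) : ℝ) < ‖b x‖} ^ (1 / p)) := by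
        rw [← mul_assoc, ← ENNReal.coe_mul, mul_div_cancel₀ _ hc]
        gcongr
    _ ≤ c * wk p b := by gcongr; exact le_wk p b _

lemma wk_mono (hp : 0 ≤ p) {a b : Rn n → α} (h : ∀ x, ‖a x‖ ≤ ‖b x‖) : wk p a ≤ wk p b := by
  simpa using wk_le_mul_of_ae_norm_le hp one_ne_zero (c := 1) (a := a) (b := b)
    (ae_of_all _ fun x => by simpa using h x)

lemma wk_add_le (hp : 1 ≤ p) (a b : Rn n → α) : wk p (a + b) ≤ 2 * (wk p a + wk p b) := by
  refine iSup_le fun l => ?_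
  set A := {x : Rn n | ((l / 2 : ℝ≥0) : ℝ) < ‖a x‖}
  set B := {x : Rn n | ((l / 2 : ℝ≥0) : ℝ) < ‖b x‖}
  have hsub : {x : Rn n | (l : ℝ) < ‖(a + b) x‖} ⊆ A ∪ B := by
    intro x hx
    change (l : ℝ) < ‖a x + b x‖ at hx
    rcases lt_or_ge ((l : ℝ) / 2) ‖a x‖ with ha | ha
    · left
      simpa [A] using ha
    · right
      change ((l / 2 : ℝ≥0) : ℝ) < ‖b x‖
      rw [NNReal.coe_div, NNReal.coe_ofNat]
      linarith [norm_add_le (a x) (b x)]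
  have hl : (l : ℝ≥0∞) = 2 * ((l / 2 : ℝ≥0) : ℝ≥0∞) := by
    rw [ENNReal.coe_div two_ne_zero, ENNReal.coe_ofNat, ENNReal.mul_div_cancel two_ne_zero
      ENNReal.ofNat_ne_top]
  calc (l : ℝ≥0∞) * volume {x : Rn n | (l : ℝ) < ‖(a + b) x‖} ^ (1 / p)
      ≤ l * (volume A + volume B) ^ (1 / p) := by
        gcongr
        exact (measure_mono hsub).trans (measure_union_le A B)
    _ ≤ l * (volume A ^ (1 / p) + volume B ^ (1 / p)) := by
        gcongr
        exact ENNReal.rpow_add_le_add_rpow _ _ (by positivity)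
          (div_le_one_of_le₀ hp (by linarith))
    _ = 2 * ((l / 2 : ℝ≥0) * volume A ^ (1 / p) + (l / 2 : ℝ≥0) * volume B ^ (1 / p)) := by
        rw [hl]; ring
    _ ≤ 2 * (wk p a + wk p b) := by gcongr <;> exact le_wk p _ _

lemma wk_le_of_norm_le_of_support_subset (hp : 0 < p) {a : Rn n → α} {δ : ℝ}
    {S : Set (Rn n)} (hδ : ∀ x, ‖a x‖ ≤ δ) (hS : Function.support a ⊆ S) :
    wk p a ≤ ENNReal.ofReal δ * volume S ^ (1 / p) := by
  refine iSup_le fun l => ?_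
  rcases Set.eq_empty_or_nonempty {x : Rn n | (l : ℝ) < ‖a x‖} with hE | ⟨x₀, hx₀⟩
  · rw [hE, measure_empty, ENNReal.zero_rpow_of_pos (by positivity), mul_zero]
    exact zero_le
  · have hsub : {x : Rn n | (l : ℝ) < ‖a x‖} ⊆ S := fun x hx =>
      hS (norm_pos_iff.mp (l.coe_nonneg.trans_lt hx))
    refine mul_le_mul' ?_ (ENNReal.rpow_le_rpow (measure_mono hsub) (by positivity))
    rw [← ENNReal.ofReal_coe_nnreal]
    exact ENNReal.ofReal_le_ofReal ((show (l : ℝ) < ‖a x₀‖ from hx₀).le.trans (hδ x₀))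

lemma volume_setOf_lt_norm_le_of_wk_le (hp : 0 < p) {g : Rn n → α} {C : ℝ≥0∞} (hg : wk p g ≤ C)
    {l : ℝ≥0} (hl : l ≠ 0) : volume {x : Rn n | (l : ℝ) < ‖g x‖} ≤ (C / l) ^ p := by
  have h : volume {x : Rn n | (l : ℝ) < ‖g x‖} ^ (1 / p) ≤ C / l := by
    rw [ENNReal.le_div_iff_mul_le (Or.inl (by exact_mod_cast hl)) (Or.inl ENNReal.coe_ne_top),
      mul_comm]
    exact (le_wk p g l).trans hg
  calc volume {x : Rn n | (l : ℝ) < ‖g x‖}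
      = (volume {x : Rn n | (l : ℝ) < ‖g x‖} ^ (1 / p)) ^ p := by
        rw [← ENNReal.rpow_mul, one_div_mul_cancel hp.ne', ENNReal.rpow_one]
    _ ≤ (C / l) ^ p := by gcongr

lemma eLpNorm_lt_top_of_wk_ne_top_of_norm_le (hp : 0 < p) {q : ℝ} (hpq : p < q)
    {g : Rn n → α} {M : ℝ} (hM : ∀ x, ‖g x‖ ≤ M) (hg : wk p g ≠ ⊤) :
    eLpNorm g (ENNReal.ofReal q) volume < ⊤ := by
  have hq : 0 < q := hp.trans hpq
  set M' : ℝ≥0 := M.toNNReal + 1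
  have hM' : ∀ x, ‖g x‖ ≤ M' := fun x => (hM x).trans <| by
    simp only [M', NNReal.coe_add, Real.coe_toNNReal', NNReal.coe_one]
    linarith [le_max_left M 0]
  set r : ℝ≥0∞ := (2⁻¹ : ℝ≥0) ^ (q - p)
  have hr : r < 1 := ENNReal.rpow_lt_one (by norm_num) (by linarith)
  set D : ℝ≥0∞ := 2 ^ q * wk p g ^ p * (M' : ℝ≥0∞) ^ (q - p)
  have hterm : ∀ k : ℕ, ((2 * (M' * 2⁻¹ ^ (k + 1)) : ℝ≥0) : ℝ≥0∞) ^ q *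
      volume {x | ((M' * 2⁻¹ ^ (k + 1) : ℝ≥0) : ℝ) < ‖g x‖} ≤ D * r * r ^ k := by
    intro k
    have hs : M' * 2⁻¹ ^ (k + 1) ≠ 0 := by positivity
    calc _ ≤ ((2 * (M' * 2⁻¹ ^ (k + 1)) : ℝ≥0) : ℝ≥0∞) ^ q *
          (wk p g / (M' * 2⁻¹ ^ (k + 1) : ℝ≥0)) ^ p := by
          gcongr
          exact volume_setOf_lt_norm_le_of_wk_le hp le_rfl hs
      _ = D * r * r ^ k := by
          rw [coe_two_mul_rpow_mul_div_rpow hp hq hs, ENNReal.coe_mul,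
            ENNReal.mul_rpow_of_nonneg _ _ (by linarith), ENNReal.coe_pow,
            ← ENNReal.rpow_natCast_mul, mul_comm ((k + 1 : ℕ) : ℝ), ENNReal.rpow_mul_natCast]
          simp only [D, r, pow_succ]
          ring
  rw [eLpNorm_lt_top_iff_lintegral_rpow_enorm_lt_top (by simpa using hq) ENNReal.ofReal_ne_top,
    ENNReal.toReal_ofReal hq.le]
  calc ∫⁻ x, ‖g x‖ₑ ^ q
      ≤ ∑' k : ℕ, D * r * r ^ k := (lintegral_rpow_le_tsum_dyadic volume hq hM').trans
        (ENNReal.tsum_le_tsum hterm)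
    _ = D * r * (1 - r)⁻¹ := by rw [ENNReal.tsum_mul_left, ENNReal.tsum_geometric]
    _ < ⊤ := by
        refine ENNReal.mul_lt_top (ENNReal.mul_lt_top (ENNReal.mul_lt_top (ENNReal.mul_lt_top
          ?_ ?_) ?_) (hr.trans ENNReal.one_lt_top)) (ENNReal.inv_lt_top.mpr (tsub_pos_of_lt hr))
        all_goals exact ENNReal.rpow_lt_top_of_nonneg (by linarith) (by simp [hg])

lemma eventually_wk_sub_truncAt_lt (hp : 0 ≤ p) {u : Rn n → ℝ} (hu : MemTilde p u) {η : ℝ}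
    (hη : 0 < η) : ∀ᶠ M in atTop, wk p (u - truncAt M ∘ u) < ENNReal.ofReal η := by
  obtain ⟨v, -, hv, huv⟩ := hu (η / 2) (by positivity)
  have hvK : ∀ᵐ x, |v x| ≤ (eLpNorm v ⊤ volume).toReal := by
    filter_upwards [ae_le_eLpNormEssSup (f := v) (μ := volume)] with x hx
    rw [← eLpNorm_exponent_top] at hx
    simpa using ENNReal.toReal_mono hv.ne hx
  filter_upwards [eventually_ge_atTop (2 * (eLpNorm v ⊤ volume).toReal)] with M hM
  calc wk p (u - truncAt M ∘ u) ≤ (2 : ℝ≥0) * wk p (u - v) :=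
        wk_le_mul_of_ae_norm_le hp two_ne_zero <| hvK.mono fun x hx => by
          simpa using abs_sub_truncAt_le_two_mul hx hM (u x)
    _ < 2 * ENNReal.ofReal (η / 2) := by
        rw [ENNReal.coe_ofNat]
        exact ENNReal.mul_lt_mul_right two_ne_zero ENNReal.ofNat_ne_top huv
    _ = ENNReal.ofReal η := by
        rw [← ENNReal.ofReal_ofNat 2, ← ENNReal.ofReal_mul zero_le_two]
        ring_nf

lemma wk_sub_truncAt_le (hp : 1 ≤ p) (u w : Rn n → ℝ) (M : ℝ) :
    wk p (u - truncAt M ∘ u) ≤ 2 * (wk p (w - truncAt M ∘ w) + 2 * wk p (u - w)) := by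
  calc wk p (u - truncAt M ∘ u)
      = wk p ((w - truncAt M ∘ w) + ((u - truncAt M ∘ u) - (w - truncAt M ∘ w))) := by
        rw [add_sub_cancel]
    _ ≤ 2 * (wk p (w - truncAt M ∘ w) + wk p ((u - truncAt M ∘ u) - (w - truncAt M ∘ w))) :=
        wk_add_le hp _ _
    _ ≤ 2 * (wk p (w - truncAt M ∘ w) + 2 * wk p (u - w)) := by
        gcongr
        simpa using wk_le_mul_of_ae_norm_le (by linarith) (c := 2) two_ne_zero
          (ae_of_all _ fun x => by simpa using abs_sub_truncAt_sub_le M (u x) (w x))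

lemma exists_eventually_forall_ge_wk_sub_truncAt_lt {ι : Type*} {l : Filter ι} (hp : 1 ≤ p)
    {u : ι → Rn n → ℝ} {w : Rn n → ℝ} (hw : MemTilde p w)
    (hu : Tendsto (fun i => wk p (u i - w)) l (𝓝 0)) {ε : ℝ} (hε : 0 < ε) :
    ∃ K, ∀ᶠ i in l, ∀ M ≥ K, wk p (u i - truncAt M ∘ u i) < ENNReal.ofReal ε := by
  obtain ⟨K, hK⟩ := eventually_atTop.mp
    (eventually_wk_sub_truncAt_lt (by linarith) hw (η := ε / 4) (by positivity))
  refine ⟨K, (hu.eventually_lt_const (ENNReal.ofReal_pos.mpr (by positivity : 0 < ε / 8))).mono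
    fun i hi M hM => ?_⟩
  calc wk p (u i - truncAt M ∘ u i)
      ≤ 2 * (wk p (w - truncAt M ∘ w) + 2 * wk p (u i - w)) := wk_sub_truncAt_le hp _ _ M
    _ < 2 * (ENNReal.ofReal (ε / 4) + 2 * ENNReal.ofReal (ε / 8)) :=
        ENNReal.mul_lt_mul_right two_ne_zero ENNReal.ofNat_ne_top <| ENNReal.add_lt_add (hK M hM)
          (ENNReal.mul_lt_mul_right two_ne_zero ENNReal.ofNat_ne_top hi)
    _ = ENNReal.ofReal ε := by
        rw [← ENNReal.ofReal_ofNat 2, ← ENNReal.ofReal_mul zero_le_two,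
          ← ENNReal.ofReal_add (by positivity) (by positivity), ← ENNReal.ofReal_mul zero_le_two]
        ring_nf

lemma wk_truncAt_comp_sub_le (hp : 1 ≤ p) {M M' : ℝ} (hM : 1 ≤ M) (hM' : 1 ≤ M')
    (u w : Rn n → ℝ) :
    wk p (truncAt M ∘ u - truncAt M' ∘ w) ≤
      2 * (wk p (u - w) + ENNReal.ofReal |M - M'| * wk p w) := by
  calc wk p (truncAt M ∘ u - truncAt M' ∘ w)
      = wk p ((truncAt M ∘ u - truncAt M ∘ w) + (truncAt M ∘ w - truncAt M' ∘ w)) := by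
        rw [sub_add_sub_cancel]
    _ ≤ 2 * (wk p (truncAt M ∘ u - truncAt M ∘ w) + wk p (truncAt M ∘ w - truncAt M' ∘ w)) :=
        wk_add_le hp _ _
    _ ≤ 2 * (wk p (u - w) + ENNReal.ofReal |M - M'| * wk p w) := by
        gcongr
        · exact wk_mono (by linarith) fun x => abs_truncAt_sub_truncAt_le M (u x) (w x)
        calc wk p (truncAt M ∘ w - truncAt M' ∘ w)
            ≤ ENNReal.ofReal |M - M'| * volume {x | ((1 : ℝ≥0) : ℝ) < ‖w x‖} ^ (1 / p) := by
              refine wk_le_of_norm_le_of_support_subset (by linarith)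
                (fun x => abs_truncAt_sub_truncAt_level_le M M' (w x)) ?_
              refine Function.support_subset_iff'.mpr fun x hx => ?_
              have hx : |w x| ≤ 1 := by simpa using hx
              simp [truncAt_of_abs_le (hx.trans hM), truncAt_of_abs_le (hx.trans hM')]
          _ ≤ ENNReal.ofReal |M - M'| * wk p w := by
              gcongr
              simpa using le_wk p w 1

lemma tendsto_wk_truncAt_comp_sub {ι : Type*} {l : Filter ι} (hp : 1 ≤ p)
    {u : ι → Rn n → ℝ} {w : Rn n → ℝ} {M : ι → ℝ} {M₀ : ℝ}
    (hu : Tendsto (fun i => wk p (u i - w)) l (𝓝 0)) (hM : Tendsto M l (𝓝 M₀))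
    (hM1 : ∀ i, 1 ≤ M i) (hM₀ : 1 ≤ M₀) (hw : wk p w ≠ ⊤) :
    Tendsto (fun i => wk p (truncAt (M i) ∘ u i - truncAt M₀ ∘ w)) l (𝓝 0) := by
  have hlevel : Tendsto (fun i => ENNReal.ofReal |M i - M₀|) l (𝓝 0) := by
    simpa using ENNReal.tendsto_ofReal (hM.sub_const M₀).abs
  have hbound : Tendsto (fun i => 2 * (wk p (u i - w) + ENNReal.ofReal |M i - M₀| * wk p w)) l
      (𝓝 0) := by
    simpa using ENNReal.Tendsto.const_mul (hu.add (ENNReal.Tendsto.mul_const hlevel (Or.inr hw)))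
      (Or.inr ENNReal.ofNat_ne_top)
  exact tendsto_of_tendsto_of_tendsto_of_le_of_le tendsto_const_nhds hbound (fun i => zero_le)
    fun i => wk_truncAt_comp_sub_le hp (hM1 i) hM₀ (u i) w

end WeakLp

/-- `BC([0,∞); Y^{p,∞}_{p'})` is dense in `BC([0,∞); L̃^{p,∞}(ℝⁿ))`. -/
theorem stmt5 (n : ℕ) (p p' : ℝ) (hp : 1 < p) (hpp : p < p')
    (f : ℝ → Rn n → ℝ)
    (hf : BCOn (wk p) (Set.Ici 0) f)
    (htilde : ∀ s ∈ Set.Ici (0 : ℝ), MemTilde p (f s))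
    (ε : ℝ) (hε : 0 < ε) :
    ∃ g : ℝ → Rn n → ℝ,
      BCOn (wk p) (Set.Ici 0) g ∧
      (∀ s ∈ Set.Ici (0 : ℝ), wk p (g s) < ⊤ ∧
        eLpNorm (g s) (ENNReal.ofReal p') volume < ⊤) ∧
      ∀ s ∈ Set.Ici (0 : ℝ), wk p (f s - g s) < ENNReal.ofReal ε := by
  obtain ⟨⟨C, hC, hfC⟩, hfcont⟩ := hf
  have hlocal : ∀ t, ∃ K, ∀ᶠ s in 𝓝 t, ∀ M ≥ K,
      1 ≤ M ∧ (0 ≤ s → wk p (f s - truncAt M ∘ f s) < ENNReal.ofReal ε) := by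
    intro t
    rcases lt_or_ge t 0 with ht | ht
    · exact ⟨1, (eventually_lt_nhds ht).mono fun s hs M hM => ⟨hM, fun hs' => (hs.not_ge hs').elim⟩⟩
    obtain ⟨K, hK⟩ :=
      exists_eventually_forall_ge_wk_sub_truncAt_lt hp.le (htilde t ht) (hfcont t ht) hε
    exact ⟨max K 1, (eventually_nhdsWithin_iff.mp hK).mono fun s hs M hM =>
      ⟨(le_max_right _ _).trans hM, fun hs' => hs hs' M ((le_max_left _ _).trans hM)⟩⟩
  obtain ⟨L, hL⟩ := exists_continuous_forall_of_eventually_forall_ge hlocal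
  have hL0 : ∀ s, 0 ≤ L s := fun s => zero_le_one.trans (hL s).1
  have hwk : ∀ s ∈ Set.Ici (0 : ℝ), wk p (truncAt (L s) ∘ f s) ≤ C := fun s hs =>
    (wk_mono (by linarith) fun x => abs_truncAt_le_abs (hL0 s) _).trans (hfC s hs)
  refine ⟨fun s => truncAt (L s) ∘ f s, ⟨⟨C, hC, hwk⟩, fun t ht => ?_⟩,
    fun s hs => ⟨(hwk s hs).trans_lt hC, ?_⟩, fun s hs => (hL s).2 hs⟩
  · exact tendsto_wk_truncAt_comp_sub hp.le (hfcont t ht) L.continuous.continuousWithinAt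
      (fun s => (hL s).1) (hL t).1 ((hfC t ht).trans_lt hC).ne
  · exact eLpNorm_lt_top_of_wk_ne_top_of_norm_le (by linarith) hpp
      (fun x => abs_truncAt_le (hL0 s) _) ((hwk s hs).trans_lt hC).ne
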